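/- arXiv:1304.2910 — 2 statements merged into one kernel-verified Lean document; each statement's English description precedes it below -/
import Mathlib

section
/- If a sequence of positive reals satisfies 1/N ≤ 1/(N + a N^α) + γ (N + a N^α)^{−β} for all sufficiently large N, where a, γ > 0, α > 0 and β ≥ 1, then α ≤ 1. -/
open Filter Real

/-- SQL for replication rates: if `1/N ≤ 1/(N + a N^α) + γ (N + a N^α)^(-β)`
for all sufficiently large `N`, with `a, γ > 0`, `α > 0`, `β ≥ 1`, then `α ≤ 1`. -/
theorem sql_replication_rate (a γ α β : ℝ) (ha : 0 < a) (hγ : 0 < γ)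
    (hα : 0 < α) (hβ : 1 ≤ β)
    (h : ∀ᶠ N : ℕ in atTop,
      1 / (N : ℝ) ≤ 1 / ((N : ℝ) + a * (N : ℝ) ^ α)
        + γ * ((N : ℝ) + a * (N : ℝ) ^ α) ^ (-β)) :
    α ≤ 1 := by
  by_contra hc
  push_neg at hc
  -- eventually a * N^(α-1) ≤ γ
  have key : ∀ᶠ N : ℕ in atTop, a * (N : ℝ) ^ (α - 1) ≤ γ := by
    filter_upwards [h, eventually_ge_atTop 1] with N hN hN1
    set x : ℝ := (N : ℝ) with hxdef
    have hx1 : (1 : ℝ) ≤ x := by rw [hxdef]; exact_mod_cast hN1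
    have hx : (0 : ℝ) < x := lt_of_lt_of_le one_pos hx1
    have hxα : (0 : ℝ) < x ^ α := Real.rpow_pos_of_pos hx α
    set M : ℝ := x + a * x ^ α with hMdef
    have hM1 : (1 : ℝ) ≤ M := by
      have : 0 < a * x ^ α := mul_pos ha hxα
      nlinarith
    have hM : (0 : ℝ) < M := lt_of_lt_of_le one_pos hM1
    -- M^(-β) ≤ M^(-1)
    have hpow : M ^ (-β) ≤ M ^ (-1 : ℝ) :=
      Real.rpow_le_rpow_of_exponent_le hM1 (by linarith)
    have hMinv : M ^ (-1 : ℝ) = 1 / M := by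
      rw [Real.rpow_neg_one]; exact (one_div M).symm
    have h2 : 1 / x ≤ (1 + γ) / M := by
      have := hN
      rw [hMinv] at hpow
      have hγM : γ * M ^ (-β) ≤ γ * (1 / M) :=
        mul_le_mul_of_nonneg_left hpow hγ.le
      calc 1 / x ≤ 1 / M + γ * M ^ (-β) := hN
        _ ≤ 1 / M + γ * (1 / M) := by linarith
        _ = (1 + γ) / M := by ring
    have h3 : M ≤ (1 + γ) * x := by
      rw [div_le_div_iff₀ hx hM] at h2
      linarith
    have h4 : a * x ^ α ≤ γ * x := by
      rw [hMdef] at h3; nlinarith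
    -- divide by x
    have h5 : a * x ^ (α - 1) ≤ γ := by
      have hrw : x ^ (α - 1) = x ^ α / x := by
        rw [Real.rpow_sub hx, Real.rpow_one]
      rw [hrw, mul_div_assoc']
      rw [div_le_iff₀ hx]
      linarith
    exact h5
  -- but a * N^(α-1) → ∞
  have htend : Tendsto (fun N : ℕ => a * (N : ℝ) ^ (α - 1)) atTop atTop := by
    have h1 : Tendsto (fun x : ℝ => x ^ (α - 1)) atTop atTop :=
      tendsto_rpow_atTop (by linarith)
    have h2 : Tendsto (fun N : ℕ => (N : ℝ) ^ (α - 1)) atTop atTop :=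
      h1.comp tendsto_natCast_atTop_atTop
    exact h2.const_mul_atTop ha
  have := (htend.eventually_gt_atTop γ).and key
  rcases this.exists with ⟨N, h1, h2⟩
  exact absurd h2 (not_le.mpr h1)
end

section
/- If 1/N ≤ 1/(N + a N^α) + γ (N + a N^α)^{−β} holds for all sufficiently large N with a, γ > 0 and 0 < α ≤ 1, β ≥ 1, then β ≤ 2 − α; in particular β ≤ 2. -/
/-!
Writing `M = N + a N^α ≥ N`, the hypothesis says `a N^α / (N M) = 1/N - 1/M ≤ γ M^(-β)`,
i.e. `a N^α M^(β-1) ≤ γ N`; since `β ≥ 1` this gives `a N^(α+β-2) ≤ γ` for all large `N`,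
which is impossible unless `α + β - 2 ≤ 0`.
-/

open Filter Real

theorem mul_rpow_sub_two_le_of_one_div_le {x b γ β : ℝ} (hx : 0 < x) (hb : 0 ≤ b) (hβ : 1 ≤ β)
    (h : 1 / x ≤ 1 / (x + b) + γ * (x + b) ^ (-β)) :
    b * x ^ (β - 2) ≤ γ := by
  set y := x + b
  have hy : 0 < y := by positivity
  have hgap : b / (x * y) ≤ γ / y ^ β := by
    have hsub : 1 / x - 1 / y = b / (x * y) := by field_simp; ring
    rw [rpow_neg hy.le] at h
    rw [← hsub, div_eq_mul_inv γ]
    linarith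
  have hy_bound : b * y ^ (β - 1) ≤ γ * x := by
    rw [div_le_div_iff₀ (by positivity) (by positivity)] at hgap
    rw [rpow_sub_one hy.ne', mul_div_assoc', div_le_iff₀ hy]
    linarith
  have hx_le_y : b * x ^ (β - 1) ≤ b * y ^ (β - 1) :=
    mul_le_mul_of_nonneg_left (rpow_le_rpow hx.le (by linarith) (by linarith)) hb
  rw [show β - 2 = β - 1 - 1 by ring, rpow_sub_one hx.ne', mul_div_assoc', div_le_iff₀ hx]
  linarith

theorem nonpos_of_eventually_mul_natCast_rpow_le {c C ε : ℝ} (hc : 0 < c)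
    (h : ∀ᶠ N : ℕ in atTop, c * (N : ℝ) ^ ε ≤ C) : ε ≤ 0 := by
  by_contra! hε
  have hgrow : Tendsto (fun N : ℕ => c * (N : ℝ) ^ ε) atTop atTop :=
    ((tendsto_rpow_atTop hε).comp tendsto_natCast_atTop_atTop).const_mul_atTop hc
  obtain ⟨N, hN_gt, hN_le⟩ := ((hgrow.eventually_gt_atTop C).and h).exists
  linarith

theorem sql_error_exponent_general (a γ α β : ℝ) (ha : 0 < a)
    (hα : 0 < α) (hβ : 1 ≤ β)
    (h : ∀ᶠ N : ℕ in atTop,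
      1 / (N : ℝ) ≤ 1 / ((N : ℝ) + a * (N : ℝ) ^ α)
        + γ * ((N : ℝ) + a * (N : ℝ) ^ α) ^ (-β)) :
    β ≤ 2 - α ∧ β ≤ 2 := by
  have hbound : ∀ᶠ N : ℕ in atTop, a * (N : ℝ) ^ (α + β - 2) ≤ γ := by
    filter_upwards [h, eventually_gt_atTop 0] with N hN hN0
    have hx : (0 : ℝ) < N := by exact_mod_cast hN0
    have hgap := mul_rpow_sub_two_le_of_one_div_le hx (by positivity) hβ hN
    rwa [mul_assoc, ← rpow_add hx, ← add_sub_assoc] at hgap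
  have hexp := nonpos_of_eventually_mul_natCast_rpow_le ha hbound
  constructor <;> linarith

/-- Error exponent bound: if `1/N ≤ 1/(N + a N^α) + γ (N + a N^α)^(-β)` for all
sufficiently large `N`, with `a, γ > 0`, `0 < α ≤ 1`, `β ≥ 1`, then
`β ≤ 2 - α`; in particular `β ≤ 2`. -/
theorem sql_error_exponent (a γ α β : ℝ) (ha : 0 < a) (hγ : 0 < γ)
    (hα : 0 < α) (hα1 : α ≤ 1) (hβ : 1 ≤ β)
    (h : ∀ᶠ N : ℕ in atTop,
      1 / (N : ℝ) ≤ 1 / ((N : ℝ) + a * (N : ℝ) ^ α)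
        + γ * ((N : ℝ) + a * (N : ℝ) ^ α) ^ (-β)) :
    β ≤ 2 - α ∧ β ≤ 2 :=
  sql_error_exponent_general a γ α β ha hα hβ h
end
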